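/- arXiv:2509.01461 — 4 statements merged into one kernel-verified Lean document; each statement's English description precedes it below -/
import Mathlib

section
/- Let f : ℝⁿ → ℝ and h : ℝⁿ → ℝ^m be continuously differentiable, let J(x) denote the m × n Jacobian matrix of h at x, let K > 0 be a real constant, and fix x* ∈ ℝⁿ such that J(x*)J(x*)ᵀ is invertible. Define the FL-CMO closed-loop vector field δ(x) = −∇f(x) − J(x)ᵀ (J(x)J(x)ᵀ)⁻¹ (K h(x) − J(x)∇f(x)). Then δ(x*) = 0 if and only if h(x*) = 0 and there exists λ ∈ ℝ^m with ∇f(x*) + J(x*)ᵀ λ = 0; i.e., the equilibria of the closed-loop dynamics are exactly the points satisfying the first-order optimality (KKT) conditions of the equality-constrained problem min f(x) subject to h(x) = 0. -/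
/-! If `J ∘ Jᵀ = A` is invertible, the feedback multiplier `μ = A⁻¹ (c - J g)` makes
`J (-g - Jᵀ μ) = -c`, so the closed-loop field can vanish only when `c = 0`, and then
`-g - Jᵀ μ = 0` exhibits `μ` as a multiplier. Conversely, if `g = -Jᵀ λ` and `c = 0`, then
`A⁻¹ (c - J g) = A⁻¹ (A λ) = λ`. -/

theorem neg_sub_symm_feedback_eq_zero_iff {R E F : Type*} [Ring R]
    [AddCommGroup E] [Module R E] [AddCommGroup F] [Module R F]
    (J : E →ₗ[R] F) (Jt : F →ₗ[R] E) (A : F ≃ₗ[R] F) (hA : ∀ v, J (Jt v) = A v)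
    (g : E) (c : F) :
    -g - Jt (A.symm (c - J g)) = 0 ↔ c = 0 ∧ ∃ μ, g + Jt μ = 0 := by
  constructor
  · intro heq
    set μ := A.symm (c - J g)
    have hg : g = -Jt μ := by linear_combination (norm := abel) -heq
    have hAμ : A μ = c - J g := A.apply_symm_apply _
    rw [hg, map_neg, hA, sub_neg_eq_add] at hAμ
    exact ⟨right_eq_add.mp hAμ, μ, by rw [hg, neg_add_cancel]⟩
  · rintro ⟨rfl, μ, hμ⟩
    have hg : g = -Jt μ := eq_neg_of_add_eq_zero_left hμ
    simp only [hg, map_neg, hA, zero_sub, neg_neg, LinearEquiv.symm_apply_apply, sub_self]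

theorem stmt_4_general {n m : ℕ}
    (f : EuclideanSpace ℝ (Fin n) → ℝ)
    (h : EuclideanSpace ℝ (Fin n) → EuclideanSpace ℝ (Fin m))
    (K : ℝ) (hK : 0 < K)
    (xs : EuclideanSpace ℝ (Fin n))
    (A : EuclideanSpace ℝ (Fin m) ≃L[ℝ] EuclideanSpace ℝ (Fin m))
    (hA : (A : EuclideanSpace ℝ (Fin m) →L[ℝ] EuclideanSpace ℝ (Fin m)) =
      (fderiv ℝ h xs).comp (ContinuousLinearMap.adjoint (fderiv ℝ h xs))) :
    (-gradient f xs - (ContinuousLinearMap.adjoint (fderiv ℝ h xs))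
        (A.symm (K • h xs - fderiv ℝ h xs (gradient f xs))) = 0) ↔
      (h xs = 0 ∧ ∃ lam : EuclideanSpace ℝ (Fin m),
        gradient f xs + (ContinuousLinearMap.adjoint (fderiv ℝ h xs)) lam = 0) := by
  have hJJt : ∀ v, fderiv ℝ h xs (ContinuousLinearMap.adjoint (fderiv ℝ h xs) v) = A v :=
    fun v => by rw [← ContinuousLinearMap.comp_apply, ← hA, ContinuousLinearEquiv.coe_coe]
  exact (neg_sub_symm_feedback_eq_zero_iff (fderiv ℝ h xs).toLinearMap
    (ContinuousLinearMap.adjoint (fderiv ℝ h xs)).toLinearMap A.toLinearEquiv hJJt _ _).trans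
    (and_congr_left' (smul_eq_zero_iff_right hK.ne'))

/-- The equilibria of the FL-CMO closed-loop dynamics are exactly the KKT points
of the equality-constrained problem min f(x) s.t. h(x) = 0. -/
theorem stmt_4 {n m : ℕ}
    (f : EuclideanSpace ℝ (Fin n) → ℝ)
    (h : EuclideanSpace ℝ (Fin n) → EuclideanSpace ℝ (Fin m))
    (hf : ContDiff ℝ 1 f) (hh : ContDiff ℝ 1 h)
    (K : ℝ) (hK : 0 < K)
    (xs : EuclideanSpace ℝ (Fin n))
    (A : EuclideanSpace ℝ (Fin m) ≃L[ℝ] EuclideanSpace ℝ (Fin m))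
    (hA : (A : EuclideanSpace ℝ (Fin m) →L[ℝ] EuclideanSpace ℝ (Fin m)) =
      (fderiv ℝ h xs).comp (ContinuousLinearMap.adjoint (fderiv ℝ h xs))) :
    (-gradient f xs - (ContinuousLinearMap.adjoint (fderiv ℝ h xs))
        (A.symm (K • h xs - fderiv ℝ h xs (gradient f xs))) = 0) ↔
      (h xs = 0 ∧ ∃ lam : EuclideanSpace ℝ (Fin m),
        gradient f xs + (ContinuousLinearMap.adjoint (fderiv ℝ h xs)) lam = 0) :=
  stmt_4_general f h K hK xs A hA
end

section
/- Let f : ℝⁿ → ℝ and h : ℝⁿ → ℝ^m be continuously differentiable, let J(x) denote the m × n Jacobian matrix of h at x, and let K > 0. Let x : ℝ → ℝⁿ be a differentiable curve satisfying the FL-CMO closed-loop dynamics ẋ(t) = −∇f(x(t)) − J(x(t))ᵀ (J(x(t))J(x(t))ᵀ)⁻¹ (K h(x(t)) − J(x(t))∇f(x(t))) for all t ≥ 0, where J(x(t))J(x(t))ᵀ is invertible for all t ≥ 0. Then h(x(t)) = e^{−K t} h(x(0)) for all t ≥ 0; in particular h(x(t)) → 0 as t → ∞, so the constraint violation decays exponentially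 to zero along every trajectory. -/
/-! Differentiating `h ∘ x` along the closed loop, the chain rule gives `J ẋ = -J ∇f - J Jᵀ (J Jᵀ)⁻¹ (K h - J ∇f)
= -K h`: the multiplier exactly cancels the objective's contribution, so the output obeys the linear ODE
`ẏ = -K y`, whose solutions are `e^{-K t} y(0)` (the product `e^{K t} y(t)` has zero derivative). -/

open Filter Topology

theorem ContinuousLinearMap.apply_apply_symm_of_coe_eq_comp {R E F : Type*} [Semiring R]
    [AddCommMonoid E] [AddCommMonoid F] [Module R E] [Module R F]
    [TopologicalSpace E] [TopologicalSpace F] {L : E →L[R] F} {M : F →L[R] E} {A : F ≃L[R] F}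
    (hA : (A : F →L[R] F) = L.comp M) (u : F) : L (M (A.symm u)) = u := by
  simpa using (congrArg (fun T : F →L[R] F => T (A.symm u)) hA).symm

theorem ContinuousLinearMap.apply_neg_sub_apply_symm_sub_apply {R E F : Type*} [Ring R]
    [AddCommGroup E] [AddCommGroup F] [Module R E] [Module R F]
    [TopologicalSpace E] [TopologicalSpace F] {L : E →L[R] F} {M : F →L[R] E} {A : F ≃L[R] F}
    (hA : (A : F →L[R] F) = L.comp M) (g : E) (c : F) :
    L (-g - M (A.symm (c - L g))) = -c := by
  rw [map_sub, map_neg, L.apply_apply_symm_of_coe_eq_comp hA]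
  abel

theorem eq_exp_smul_of_hasDerivAt_smul {F : Type*} [NormedAddCommGroup F] [NormedSpace ℝ F]
    {y : ℝ → F} {a : ℝ} (hy : ∀ t : ℝ, 0 ≤ t → HasDerivAt y (a • y t) t) {t : ℝ} (ht : 0 ≤ t) :
    y t = Real.exp (a * t) • y 0 := by
  have hconst : ∀ s : ℝ, 0 ≤ s → HasDerivAt (fun s => Real.exp (-a * s) • y s) 0 s := by
    intro s hs
    have hexp : HasDerivAt (fun s => Real.exp (-a * s)) (Real.exp (-a * s) * (-a * 1)) s :=
      ((hasDerivAt_id s).const_mul (-a)).exp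
    refine (hexp.smul (hy s hs)).congr_deriv ?_
    rw [smul_smul, ← add_smul]
    ring_nf
    exact zero_smul ℝ _
  have hcont : ContinuousOn (fun s => Real.exp (-a * s) • y s) (Set.Icc 0 t) :=
    fun s hs => (hconst s hs.1).continuousAt.continuousWithinAt
  have h0 := constant_of_has_deriv_right_zero hcont
    (fun s hs => (hconst s hs.1).hasDerivWithinAt) t (Set.right_mem_Icc.2 ht)
  simp only [mul_zero, Real.exp_zero, one_smul] at h0
  rw [← h0, smul_smul, ← Real.exp_add]
  simp

theorem stmt_6_general {n m : ℕ}
    (f : EuclideanSpace ℝ (Fin n) → ℝ)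
    (h : EuclideanSpace ℝ (Fin n) → EuclideanSpace ℝ (Fin m))
    (hh : ContDiff ℝ 1 h)
    (K : ℝ) (hK : 0 < K)
    (x : ℝ → EuclideanSpace ℝ (Fin n))
    (A : ℝ → (EuclideanSpace ℝ (Fin m) ≃L[ℝ] EuclideanSpace ℝ (Fin m)))
    (hA : ∀ t : ℝ, 0 ≤ t →
      (A t : EuclideanSpace ℝ (Fin m) →L[ℝ] EuclideanSpace ℝ (Fin m)) =
        (fderiv ℝ h (x t)).comp (ContinuousLinearMap.adjoint (fderiv ℝ h (x t))))
    (hdyn : ∀ t : ℝ, 0 ≤ t → HasDerivAt x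
      (-gradient f (x t) - (ContinuousLinearMap.adjoint (fderiv ℝ h (x t)))
        ((A t).symm (K • h (x t) - fderiv ℝ h (x t) (gradient f (x t))))) t) :
    (∀ t : ℝ, 0 ≤ t → h (x t) = Real.exp (-K * t) • h (x 0)) ∧
    Filter.Tendsto (fun t => h (x t)) Filter.atTop (nhds 0) := by
  have hderiv : ∀ t : ℝ, 0 ≤ t → HasDerivAt (fun s => h (x s)) (-K • h (x t)) t := fun t ht =>
    ((hh.differentiable one_ne_zero (x t)).hasFDerivAt.comp_hasDerivAt t (hdyn t ht)).congr_deriv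
      (by rw [ContinuousLinearMap.apply_neg_sub_apply_symm_sub_apply (hA t ht), neg_smul])
  have hsol : ∀ t : ℝ, 0 ≤ t → h (x t) = Real.exp (-K * t) • h (x 0) :=
    fun t ht => eq_exp_smul_of_hasDerivAt_smul hderiv ht
  refine ⟨hsol, ?_⟩
  have hdecay : Tendsto (fun t : ℝ => Real.exp (-K * t) • h (x 0)) atTop (𝓝 0) := by
    simpa using (Real.tendsto_exp_atBot.comp <|
      tendsto_id.const_mul_atTop_of_neg (neg_neg_of_pos hK)).smul_const (h (x 0))
  refine hdecay.congr' ?_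
  filter_upwards [eventually_ge_atTop 0] with t ht
  exact (hsol t ht).symm

/-- Along any trajectory of the FL-CMO closed-loop dynamics, the constraint violation
decays exponentially: h(x(t)) = e^{−K t} h(x(0)) for all t ≥ 0, and h(x(t)) → 0. -/
theorem stmt_6 {n m : ℕ}
    (f : EuclideanSpace ℝ (Fin n) → ℝ)
    (h : EuclideanSpace ℝ (Fin n) → EuclideanSpace ℝ (Fin m))
    (hf : ContDiff ℝ 1 f) (hh : ContDiff ℝ 1 h)
    (K : ℝ) (hK : 0 < K)
    (x : ℝ → EuclideanSpace ℝ (Fin n))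
    (A : ℝ → (EuclideanSpace ℝ (Fin m) ≃L[ℝ] EuclideanSpace ℝ (Fin m)))
    (hA : ∀ t : ℝ, 0 ≤ t →
      (A t : EuclideanSpace ℝ (Fin m) →L[ℝ] EuclideanSpace ℝ (Fin m)) =
        (fderiv ℝ h (x t)).comp (ContinuousLinearMap.adjoint (fderiv ℝ h (x t))))
    (hdyn : ∀ t : ℝ, 0 ≤ t → HasDerivAt x
      (-gradient f (x t) - (ContinuousLinearMap.adjoint (fderiv ℝ h (x t)))
        ((A t).symm (K • h (x t) - fderiv ℝ h (x t) (gradient f (x t))))) t) :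
    (∀ t : ℝ, 0 ≤ t → h (x t) = Real.exp (-K * t) • h (x 0)) ∧
    Filter.Tendsto (fun t => h (x t)) Filter.atTop (nhds 0) :=
  stmt_6_general f h hh K hK x A hA hdyn
end

section
/- Let n_θ, p, φ, m be natural numbers with p ≥ 1 and m ≥ n_θ, define χ(k) = n_θ − k + 1 + p(1+φ) if k ≤ n_θ and χ(k) = p(1+φ) if k > n_θ, define χ₁(k) = χ(k) if k ≤ n_θ and χ₁(k) = χ(k) + 1 if k > n_θ, and define ζ(k) = (m − k) χ₁(k). Then Σ_{k=1}^{m} ζ(k) = (m²/2)(p(φ+1)+1) + (m/2)(n_θ² − n_θ − p(φ+1) − 1) − (n_θ/6)(n_θ² − 1) (equivalently, 6 Σ_{k=1}^{m} ζ(k) = 3m²(p(φ+1)+1) + 3m(n_θ² − n_θ − p(φ+1) − 1) − n_θ(n_θ² − 1)). -/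
lemma sum_Icc_id_int (n : ℕ) : 2 * ∑ k ∈ Finset.Icc 1 n, (k : ℤ) = n * (n + 1) := by
  induction n with
  | zero => simp
  | succ n ih =>
    rw [Finset.sum_Icc_succ_top (by omega)]
    push_cast
    push_cast at ih
    linear_combination ih

lemma sum_Icc_sq_int (n : ℕ) :
    6 * ∑ k ∈ Finset.Icc 1 n, (k : ℤ) ^ 2 = n * (n + 1) * (2 * n + 1) := by
  induction n with
  | zero => simp
  | succ n ih =>
    rw [Finset.sum_Icc_succ_top (by omega)]
    push_cast
    push_cast at ih
    linear_combination ih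

/-- FLOP count of the rank-one updates of the sparse Householder QR factorization:
6 Σ_{k=1}^{m} ζ(k) = 3m²(p(φ+1)+1) + 3m(n_θ² − n_θ − p(φ+1) − 1) − n_θ(n_θ² − 1),
where ζ(k) = (m − k) χ₁(k). -/
theorem stmt_13 (nθ p φ m : ℕ) (hp : 1 ≤ p) (hm : nθ ≤ m) :
    (6 * ∑ k ∈ Finset.Icc 1 m,
        (m - k) * (if k ≤ nθ then nθ - k + 1 + p * (1 + φ) else p * (1 + φ) + 1) : ℤ) =
      3 * (m : ℤ) ^ 2 * (p * (φ + 1) + 1) +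
        3 * (m : ℤ) * ((nθ : ℤ) ^ 2 - nθ - p * (φ + 1) - 1) -
        (nθ : ℤ) * ((nθ : ℤ) ^ 2 - 1) := by
  set c : ℤ := (p : ℤ) * (1 + (φ : ℤ)) with hc
  set f : ℕ → ℤ := fun k =>
    ((m : ℤ) - k) * (if k ≤ nθ then (nθ : ℤ) - k + 1 + (p : ℤ) * (1 + φ) else (p : ℤ) * (1 + φ) + 1)
    with hf
  have hcast : ((∑ k ∈ Finset.Icc 1 m,
        (m - k) * (if k ≤ nθ then nθ - k + 1 + p * (1 + φ) else p * (1 + φ) + 1) : ℕ) : ℤ) =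
      ∑ k ∈ Finset.Icc 1 m, f k := by
    rw [Nat.cast_sum]
    refine Finset.sum_congr rfl fun k hk => ?_
    obtain ⟨hk1, hk2⟩ := Finset.mem_Icc.mp hk
    by_cases h : k ≤ nθ
    · rw [if_pos h]
      simp only [hf, if_pos h]
      push_cast [Nat.cast_sub hk2, Nat.cast_sub h]
      ring
    · rw [if_neg h]
      simp only [hf, if_neg h]
      push_cast [Nat.cast_sub hk2]
      ring
  have hsplit : ∑ k ∈ Finset.Icc 1 m, f k =
      ∑ k ∈ Finset.Icc 1 nθ, f k + ∑ k ∈ Finset.Icc (nθ + 1) m, f k := by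
    have e1 : Finset.Icc 1 m = Finset.Ioc 0 m := Finset.Icc_add_one_left_eq_Ioc 0 m
    have e2 : Finset.Icc 1 nθ = Finset.Ioc 0 nθ := Finset.Icc_add_one_left_eq_Ioc 0 nθ
    have e3 : Finset.Icc (nθ + 1) m = Finset.Ioc nθ m := Finset.Icc_add_one_left_eq_Ioc nθ m
    rw [e1, e2, e3]
    exact (Finset.sum_Ioc_consecutive f (Nat.zero_le nθ) hm).symm
  have h1 : ∑ k ∈ Finset.Icc 1 nθ, f k =
      ∑ k ∈ Finset.Icc 1 nθ,
        ((k : ℤ) ^ 2 - ((m : ℤ) + nθ + 1 + c) * k + (m : ℤ) * ((nθ : ℤ) + 1 + c)) := by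
    refine Finset.sum_congr rfl fun k hk => ?_
    have hk' : k ≤ nθ := (Finset.mem_Icc.mp hk).2
    simp only [hf, if_pos hk', hc]
    ring
  have h2 : ∑ k ∈ Finset.Icc (nθ + 1) m, f k =
      ∑ k ∈ Finset.Icc (nθ + 1) m, ((c + 1) * (m : ℤ) - (c + 1) * k) := by
    refine Finset.sum_congr rfl fun k hk => ?_
    have hk' : ¬ k ≤ nθ := by
      have := (Finset.mem_Icc.mp hk).1; omega
    simp only [hf, if_neg hk', hc]
    ring
  have hA1 := sum_Icc_id_int nθ
  have hA2 := sum_Icc_sq_int nθ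
  have hA3 : 2 * ∑ k ∈ Finset.Icc (nθ + 1) m, (k : ℤ) =
      (m : ℤ) * (m + 1) - (nθ : ℤ) * (nθ + 1) := by
    have hsp : ∑ k ∈ Finset.Icc 1 nθ, (k : ℤ) + ∑ k ∈ Finset.Icc (nθ + 1) m, (k : ℤ) =
        ∑ k ∈ Finset.Icc 1 m, (k : ℤ) := by
      have e1 : Finset.Icc 1 m = Finset.Ioc 0 m := Finset.Icc_add_one_left_eq_Ioc 0 m
      have e2 : Finset.Icc 1 nθ = Finset.Ioc 0 nθ := Finset.Icc_add_one_left_eq_Ioc 0 nθ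
      have e3 : Finset.Icc (nθ + 1) m = Finset.Ioc nθ m := Finset.Icc_add_one_left_eq_Ioc nθ m
      rw [e1, e2, e3]
      exact Finset.sum_Ioc_consecutive _ (Nat.zero_le nθ) hm
    have := sum_Icc_id_int m
    linear_combination this - hA1 + 2 * hsp
  have hcard : ((Finset.Icc (nθ + 1) m).card : ℤ) = (m : ℤ) - nθ := by
    rw [Nat.card_Icc]
    have : m + 1 - (nθ + 1) = m - nθ := by omega
    rw [this, Nat.cast_sub hm]
  have hcardn : ((Finset.Icc 1 nθ).card : ℤ) = (nθ : ℤ) := by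
    rw [Nat.card_Icc]; simp
  have d1 : ∑ k ∈ Finset.Icc 1 nθ,
      ((k : ℤ) ^ 2 - ((m : ℤ) + nθ + 1 + c) * k + (m : ℤ) * ((nθ : ℤ) + 1 + c)) =
      (∑ k ∈ Finset.Icc 1 nθ, (k : ℤ) ^ 2) -
        ((m : ℤ) + nθ + 1 + c) * ∑ k ∈ Finset.Icc 1 nθ, (k : ℤ) +
        (nθ : ℤ) * ((m : ℤ) * ((nθ : ℤ) + 1 + c)) := by
    rw [Finset.sum_add_distrib, Finset.sum_sub_distrib, ← Finset.mul_sum, Finset.sum_const,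
      nsmul_eq_mul, hcardn]
  have d2 : ∑ k ∈ Finset.Icc (nθ + 1) m, ((c + 1) * (m : ℤ) - (c + 1) * k) =
      ((m : ℤ) - nθ) * ((c + 1) * m) - (c + 1) * ∑ k ∈ Finset.Icc (nθ + 1) m, (k : ℤ) := by
    rw [Finset.sum_sub_distrib, Finset.sum_const, nsmul_eq_mul, hcard, Finset.mul_sum]
  rw [hcast, hsplit, h1, h2, d1, d2]
  linear_combination hA2 - 3 * ((m : ℤ) + nθ + 1 + c) * hA1 - 3 * (c + 1) * hA3
end

section
/- Fix natural numbers n_θ, p ≥ 1 and φ. Define, for natural numbers m and k with m ≥ n_θ: χ(k) = n_θ − k + 1 + p(1+φ) if k ≤ n_θ and p(1+φ) otherwise; i(k) = (k mod p) + 1; ψ₂(k) = (p − i(k)) p(φ+1) + p² φ(φ+1)/2; ψ₁(k) = (n_θ − k + 1)(m − k) + ψ₂(k); ψ(k) = ψ₁(k) if k ≤ n_θ and ψ₂(k) otherwise; χ₁(k) = χ(k) if k ≤ n_θ and χ(k)+1 otherwise; and ζ(k) = (m − k) χ₁(k). Then there exist constants M > 0 and m₀ > 0 such that for all m > m₀ with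 m ≥ n_θ and p ∣ m, Σ_{k=1}^{m} (3χ(k) + ψ(k) + ζ(k)) ≤ M m². (This is the content of Theorem 3: exploiting sparsity, the FLOP count of one iteration of the FL-CMO-based identification algorithm is O(m²) in the number of constraints m, rather than O(m³).) -/
/-- Theorem 3: exploiting sparsity, the FLOP count of one iteration of the FL-CMO-based
identification algorithm is O(m²) in the number of constraints m:
there exist M > 0 and m₀ > 0 such that for all admissible m > m₀,
Σ_{k=1}^{m} (3χ(k) + ψ(k) + ζ(k)) ≤ M m². -/
theorem stmt_14 (nθ p φ : ℕ) (hp : 1 ≤ p) :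
    ∃ (M : ℝ) (m₀ : ℕ), 0 < M ∧ 0 < m₀ ∧
      ∀ m : ℕ, m₀ < m → nθ ≤ m → p ∣ m →
        ((∑ k ∈ Finset.Icc 1 m,
            (3 * (if k ≤ nθ then nθ - k + 1 + p * (1 + φ) else p * (1 + φ)) +
             (if k ≤ nθ then
                (nθ - k + 1) * (m - k) +
                  ((p - (k % p + 1)) * (p * (φ + 1)) + p ^ 2 * (φ * (φ + 1) / 2))
              else
                (p - (k % p + 1)) * (p * (φ + 1)) + p ^ 2 * (φ * (φ + 1) / 2)) +
             (m - k) * (if k ≤ nθ then nθ - k + 1 + p * (1 + φ) else p * (1 + φ) + 1)) : ℕ) : ℝ)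
          ≤ M * (m : ℝ) ^ 2 := by
  set A : ℕ := 3 * (nθ + 1 + p * (1 + φ)) + (p * (p * (φ + 1)) + p ^ 2 * (φ * (φ + 1) / 2))
    with hA
  set B : ℕ := (nθ + 1) + (nθ + 1 + p * (1 + φ) + 1) with hB
  refine ⟨((A + B + 1 : ℕ) : ℝ), 1, by positivity, one_pos, ?_⟩
  intro m hm _ _
  have hnat : (∑ k ∈ Finset.Icc 1 m,
      (3 * (if k ≤ nθ then nθ - k + 1 + p * (1 + φ) else p * (1 + φ)) +
       (if k ≤ nθ then
          (nθ - k + 1) * (m - k) +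
            ((p - (k % p + 1)) * (p * (φ + 1)) + p ^ 2 * (φ * (φ + 1) / 2))
        else
          (p - (k % p + 1)) * (p * (φ + 1)) + p ^ 2 * (φ * (φ + 1) / 2)) +
       (m - k) * (if k ≤ nθ then nθ - k + 1 + p * (1 + φ) else p * (1 + φ) + 1)))
      ≤ (A + B + 1) * m ^ 2 := by
    have hterm : ∀ k ∈ Finset.Icc 1 m,
        (3 * (if k ≤ nθ then nθ - k + 1 + p * (1 + φ) else p * (1 + φ)) +
         (if k ≤ nθ then
            (nθ - k + 1) * (m - k) +
              ((p - (k % p + 1)) * (p * (φ + 1)) + p ^ 2 * (φ * (φ + 1) / 2))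
          else
            (p - (k % p + 1)) * (p * (φ + 1)) + p ^ 2 * (φ * (φ + 1) / 2)) +
         (m - k) * (if k ≤ nθ then nθ - k + 1 + p * (1 + φ) else p * (1 + φ) + 1))
        ≤ A + B * m := by
      intro k hk
      have h1 : nθ - k + 1 ≤ nθ + 1 := by omega
      have h2 : m - k ≤ m := Nat.sub_le _ _
      have h3 : p - (k % p + 1) ≤ p := Nat.sub_le _ _
      have p1 : (nθ - k + 1) * (m - k) ≤ (nθ + 1) * m := Nat.mul_le_mul h1 h2
      have p2 : (p - (k % p + 1)) * (p * (φ + 1)) ≤ p * (p * (φ + 1)) :=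
        Nat.mul_le_mul_right _ h3
      have p3 : (m - k) * (nθ - k + 1 + p * (1 + φ)) ≤ m * (nθ + 1 + p * (1 + φ)) :=
        Nat.mul_le_mul h2 (by omega)
      have p4 : (m - k) * (p * (1 + φ) + 1) ≤ m * (nθ + 1 + p * (1 + φ) + 1) :=
        Nat.mul_le_mul h2 (by omega)
      by_cases h : k ≤ nθ <;> simp only [h, if_true, if_false, hA, hB] <;> nlinarith
    calc (∑ k ∈ Finset.Icc 1 m, _) ≤ (Finset.Icc 1 m).card * (A + B * m) :=
          Finset.sum_le_card_nsmul _ _ _ hterm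
      _ = m * (A + B * m) := by rw [Nat.card_Icc, Nat.add_sub_cancel]
      _ ≤ (A + B + 1) * m ^ 2 := by nlinarith [Nat.le_self_pow (two_ne_zero) m]
  calc ((∑ k ∈ Finset.Icc 1 m, _ : ℕ) : ℝ) ≤ (((A + B + 1) * m ^ 2 : ℕ) : ℝ) := by
        exact_mod_cast hnat
    _ = ((A + B + 1 : ℕ) : ℝ) * (m : ℝ) ^ 2 := by push_cast; ring
end
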